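/- Let a₁, a₂, a₃, ω₁, ω₂, ω₃ be arbitrary real numbers. Let T_{abc} (a,b,c ∈ Fin 4, all indices lowered) be the tensor antisymmetric in its last two indices whose only nonvanishing components, up to that antisymmetry, are T_{0,0,i} = a_i for i = 1,2,3, T_{1,0,2} = −T_{2,0,1} = −ω₃, T_{1,0,3} = −T_{3,0,1} = ω₂, and T_{2,0,3} = −T_{3,0,2} = −ω₁. Then: (i) the torsion scalar vanishes, T := Σ^{abc}T_{abc} = 0; (ii) for all indices a, d one has 4·Σ_{b,c} Σ^{bca} T_{bc}{}^{d} − η^{ad}·T = 0 (the gravitational energy-momentum density of the proper reference frame of an arbitrarily accelerated and rotating observer in Minkowski spacetime vanishes); and (iii) Σ^{a0b} = Σ^{b0a} for all a, b, where the middle index 0 is raised with η (the angular-momentum density vanishes). -/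

import Mathlib

/-! Statement 0: The proper-reference-frame torsion in Minkowski spacetime has
vanishing torsion scalar, vanishing gravitational energy-momentum density, and
vanishing angular-momentum density. -/

namespace Stmt0

noncomputable section

/-- Minkowski metric diag(1,-1,-1,-1) on `Fin 4` (it equals its own inverse). -/
def η : Fin 4 → Fin 4 → ℝ := fun a b => if a = b then (if a = 0 then 1 else -1) else 0

/-- Torsion trace `T_a := Σ_b η^{bb} T_{bba}`. -/
def trace (T : Fin 4 → Fin 4 → Fin 4 → ℝ) : Fin 4 → ℝ := fun a => ∑ b, η b b * T b b a

/-- Torsion trace with raised index `T^a := Σ_d η^{ad} T_d`. -/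
def traceU (T : Fin 4 → Fin 4 → Fin 4 → ℝ) : Fin 4 → ℝ := fun a => ∑ d, η a d * trace T d

/-- Fully raised torsion `T^{abc}`. -/
def TU (T : Fin 4 → Fin 4 → Fin 4 → ℝ) : Fin 4 → Fin 4 → Fin 4 → ℝ := fun a b c =>
  ∑ d, ∑ e, ∑ f, η a d * η b e * η c f * T d e f

/-- Superpotential `Σ^{abc} := ¼(T^{abc} + T^{bac} − T^{cab}) + ½(η^{ac}T^b − η^{ab}T^c)`. -/
def Sup (T : Fin 4 → Fin 4 → Fin 4 → ℝ) : Fin 4 → Fin 4 → Fin 4 → ℝ := fun a b c =>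
  (1/4) * (TU T a b c + TU T b a c - TU T c a b)
    + (1/2) * (η a c * traceU T b - η a b * traceU T c)

/-- Torsion scalar `T := Σ^{abc} T_{abc}`. -/
def torsionScalar (T : Fin 4 → Fin 4 → Fin 4 → ℝ) : ℝ :=
  ∑ a, ∑ b, ∑ c, Sup T a b c * T a b c

/-- The matrix `M a c` such that the proper-reference-frame torsion is
`T_{abc} = M a c δ⁰_b − M a b δ⁰_c`: its rows are `(0, a₁, a₂, a₃)`,
`(0, 0, −ω₃, ω₂)`, `(0, ω₃, 0, −ω₁)`, `(0, −ω₂, ω₁, 0)`. -/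
def M (a₁ a₂ a₃ ω₁ ω₂ ω₃ : ℝ) : Fin 4 → Fin 4 → ℝ :=
  ![![0, a₁, a₂, a₃], ![0, 0, -ω₃, ω₂], ![0, ω₃, 0, -ω₁], ![0, -ω₂, ω₁, 0]]

/-- The torsion tensor (all indices lowered), antisymmetric in its last two
indices, whose only nonvanishing components up to that antisymmetry are
`T_{0,0,i} = aᵢ`, `T_{1,0,2} = −T_{2,0,1} = −ω₃`, `T_{1,0,3} = −T_{3,0,1} = ω₂`,
`T_{2,0,3} = −T_{3,0,2} = −ω₁`. -/
def Tprf (a₁ a₂ a₃ ω₁ ω₂ ω₃ : ℝ) : Fin 4 → Fin 4 → Fin 4 → ℝ := fun a b c =>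
  M a₁ a₂ a₃ ω₁ ω₂ ω₃ a c * (if b = (0 : Fin 4) then 1 else 0)
    - M a₁ a₂ a₃ ω₁ ω₂ ω₃ a b * (if c = (0 : Fin 4) then 1 else 0)

/-! The superpotential inherits the antisymmetry of `T_{abc}` in `b, c`, and for this torsion
`Σ^{a0b} = 0` identically, so `Σ^{abc}` vanishes as soon as `b = 0` or `c = 0`; `T_{abc}` vanishes
unless `b = 0` or `c = 0`. Hence every term of `Σ^{abc} T_{abc}` is zero, and in `Σ^{bca} T_{bc}{}^d`
only `d = 0` survives, where the acceleration row of `M` pairs with its rotation block and the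
terms cancel by antisymmetry of that block. -/

lemma sum_η_mul (a : Fin 4) (f : Fin 4 → ℝ) : ∑ d, η a d * f d = η a a * f a := by
  fin_cases a <;> simp [η]

lemma TU_eq (T : Fin 4 → Fin 4 → Fin 4 → ℝ) (a b c : Fin 4) :
    TU T a b c = η a a * η b b * η c c * T a b c := by
  simp only [TU, mul_assoc, ← Finset.mul_sum, sum_η_mul]

lemma Sup_swap {T : Fin 4 → Fin 4 → Fin 4 → ℝ} (hT : ∀ a b c, T a c b = -T a b c)
    (a b c : Fin 4) : Sup T a c b = -Sup T a b c := by
  simp only [Sup, TU_eq, hT a c b, hT b c a, hT c b a]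
  ring

section Tprf

variable {a₁ a₂ a₃ ω₁ ω₂ ω₃ : ℝ}

lemma Tprf_swap (a b c : Fin 4) :
    Tprf a₁ a₂ a₃ ω₁ ω₂ ω₃ a c b = -Tprf a₁ a₂ a₃ ω₁ ω₂ ω₃ a b c := by
  simp only [Tprf]
  ring

lemma Tprf_eq_zero {b c : Fin 4} (hb : b ≠ 0) (hc : c ≠ 0) (a : Fin 4) :
    Tprf a₁ a₂ a₃ ω₁ ω₂ ω₃ a b c = 0 := by
  simp [Tprf, hb, hc]

lemma traceU_Tprf (a : Fin 4) :
    traceU (Tprf a₁ a₂ a₃ ω₁ ω₂ ω₃) a = η a a * M a₁ a₂ a₃ ω₁ ω₂ ω₃ 0 a := by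
  rw [traceU, sum_η_mul]
  fin_cases a <;> simp [trace, Tprf, η, M, Fin.sum_univ_four]

lemma Sup_Tprf_mid_zero (a b : Fin 4) : Sup (Tprf a₁ a₂ a₃ ω₁ ω₂ ω₃) a 0 b = 0 := by
  fin_cases a <;> fin_cases b <;> simp [Sup, TU_eq, traceU_Tprf, Tprf, η, M] <;> ring

lemma Sup_Tprf_last_zero (a b : Fin 4) : Sup (Tprf a₁ a₂ a₃ ω₁ ω₂ ω₃) a b 0 = 0 := by
  rw [← neg_eq_zero, ← Sup_swap Tprf_swap, Sup_Tprf_mid_zero]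

lemma Sup_Tprf_mul_Tprf_eq_zero {d : Fin 4} (hd : d ≠ 0) (a b c a' : Fin 4) :
    Sup (Tprf a₁ a₂ a₃ ω₁ ω₂ ω₃) a b c * Tprf a₁ a₂ a₃ ω₁ ω₂ ω₃ a' b d = 0 := by
  rcases eq_or_ne b 0 with rfl | hb
  · rw [Sup_Tprf_mid_zero, zero_mul]
  · rw [Tprf_eq_zero hb hd, mul_zero]

lemma torsionScalar_Tprf : torsionScalar (Tprf a₁ a₂ a₃ ω₁ ω₂ ω₃) = 0 := by
  refine Finset.sum_eq_zero fun a _ => Finset.sum_eq_zero fun b _ => Finset.sum_eq_zero fun c _ => ?_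
  rcases eq_or_ne c 0 with rfl | hc
  · rw [Sup_Tprf_last_zero, zero_mul]
  · exact Sup_Tprf_mul_Tprf_eq_zero hc a b c a

lemma sum_Sup_Tprf_mul_Tprf (a d : Fin 4) :
    ∑ b, ∑ c, Sup (Tprf a₁ a₂ a₃ ω₁ ω₂ ω₃) b c a * Tprf a₁ a₂ a₃ ω₁ ω₂ ω₃ b c d = 0 := by
  rcases eq_or_ne d 0 with rfl | hd
  · fin_cases a <;> simp [Fin.sum_univ_four, Sup, TU_eq, traceU_Tprf, Tprf, η, M] <;> ring
  · exact Finset.sum_eq_zero fun b _ => Finset.sum_eq_zero fun c _ =>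
      Sup_Tprf_mul_Tprf_eq_zero hd b c a b

end Tprf

theorem prf_energy_momentum_vanishes (a₁ a₂ a₃ ω₁ ω₂ ω₃ : ℝ) :
    -- (i) the torsion scalar vanishes
    torsionScalar (Tprf a₁ a₂ a₃ ω₁ ω₂ ω₃) = 0 ∧
    -- (ii) 4 Σ^{bca} T_{bc}{}^d − η^{ad} T = 0
    (∀ a d : Fin 4,
      4 * (∑ b, ∑ c, Sup (Tprf a₁ a₂ a₃ ω₁ ω₂ ω₃) b c a *
          (∑ e, η d e * Tprf a₁ a₂ a₃ ω₁ ω₂ ω₃ b c e))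
        - η a d * torsionScalar (Tprf a₁ a₂ a₃ ω₁ ω₂ ω₃) = 0) ∧
    -- (iii) Σ^{a0b} = Σ^{b0a}
    (∀ a b : Fin 4,
      Sup (Tprf a₁ a₂ a₃ ω₁ ω₂ ω₃) a 0 b = Sup (Tprf a₁ a₂ a₃ ω₁ ω₂ ω₃) b 0 a) := by
  refine ⟨torsionScalar_Tprf, fun a d => ?_, fun a b => ?_⟩
  · simp only [sum_η_mul, mul_left_comm _ (η d d), ← Finset.mul_sum, sum_Sup_Tprf_mul_Tprf,
      torsionScalar_Tprf]
    ring
  · rw [Sup_Tprf_mid_zero, Sup_Tprf_mid_zero]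

end

end Stmt0
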